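/- Let N ≥ 2, q > N, β = (N−1)q/N + 1, a ≥ 1, R > 0, λ ∈ (0,1). For radial u ∈ C_c^∞(B_R(0) \ {0}), define u_λ(x) = λ^{−(N−1)/N} u((|x|/(aR))^{λ−1} x) for |x| ≤ a^{(1−1/λ)}R and u_λ = 0 otherwise. Then ∫_{B_R} |∇u_λ|^N dx = ∫_{B_R} |∇u|^N dx and ∫_{B_R} |u_λ|^q |x|^{−N}(log(aR/|x|))^{−β} dx = ∫_{B_R} |u|^q |x|^{−N}(log(aR/|x|))^{−β} dx. -/

import Mathlib

open Set


open MeasureTheory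

lemma radial_fderiv_norm_eq {E : Type*} [NormedAddCommGroup E] [InnerProductSpace ℝ E]
    [Nontrivial E] (F : ℝ → ℝ) (x : E) (hx : x ≠ 0) (hF : DifferentiableAt ℝ F ‖x‖) :
    ‖fderiv ℝ (fun y => F ‖y‖) x‖ = |deriv F ‖x‖| := by
  have hn : DifferentiableAt ℝ (‖·‖) x :=
    (contDiffAt_norm (𝕜 := ℝ) (n := 1) hx).differentiableAt one_ne_zero
  have h1 : HasFDerivAt (fun y => F ‖y‖) (deriv F ‖x‖ • fderiv ℝ (‖·‖) x) x :=
    (hF.hasDerivAt).comp_hasFDerivAt x hn.hasFDerivAt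
  rw [h1.fderiv, norm_smul, norm_fderiv_norm hn, mul_one, Real.norm_eq_abs]

noncomputable def uScaled (N : ℕ) (a R lam : ℝ)
    (u : EuclideanSpace ℝ (Fin N) → ℝ) : EuclideanSpace ℝ (Fin N) → ℝ :=
  fun x => if ‖x‖ ≤ a ^ (1 - 1/lam) * R then
    lam ^ (-(((N : ℝ) - 1)/(N : ℝ))) * u (((‖x‖/(a*R)) ^ (lam - 1)) • x) else 0

theorem stmt10 (N : ℕ) (hN : 2 ≤ N) (q a R lam β : ℝ) (hq : (N : ℝ) < q) (ha : 1 ≤ a)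
    (hR : 0 < R) (hlam : lam ∈ Set.Ioo (0:ℝ) 1) (hβ : β = ((N : ℝ) - 1)/N * q + 1)
    (u : EuclideanSpace ℝ (Fin N) → ℝ) (w : ℝ → ℝ) (hrad : ∀ x, u x = w ‖x‖)
    (hsm : ContDiff ℝ (⊤ : ℕ∞) u)
    (hsupp : tsupport u ⊆ Metric.ball (0 : EuclideanSpace ℝ (Fin N)) R \ {0}) :
    (∫ x in Metric.ball (0 : EuclideanSpace ℝ (Fin N)) R,
        ‖fderiv ℝ (uScaled N a R lam u) x‖ ^ (N : ℝ)) =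
      (∫ x in Metric.ball (0 : EuclideanSpace ℝ (Fin N)) R, ‖fderiv ℝ u x‖ ^ (N : ℝ)) ∧
    (∫ x in Metric.ball (0 : EuclideanSpace ℝ (Fin N)) R,
        |uScaled N a R lam u x| ^ q * ‖x‖ ^ (-(N : ℝ)) * (Real.log (a*R/‖x‖)) ^ (-β)) =
      (∫ x in Metric.ball (0 : EuclideanSpace ℝ (Fin N)) R,
        |u x| ^ q * ‖x‖ ^ (-(N : ℝ)) * (Real.log (a*R/‖x‖)) ^ (-β)) := by
  obtain ⟨hl0, hl1⟩ := hlam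
  haveI : Nonempty (Fin N) := ⟨⟨0, by omega⟩⟩
  haveI : Nontrivial (EuclideanSpace ℝ (Fin N)) := inferInstance
  have hN0 : (0:ℝ) < N := by exact_mod_cast Nat.pos_of_ne_zero (by omega)
  have hNne : (N:ℝ) ≠ 0 := ne_of_gt hN0
  have ha0 : (0:ℝ) < a := lt_of_lt_of_le one_pos ha
  have haR : (0:ℝ) < a * R := mul_pos ha0 hR
  have hq0 : (0:ℝ) < q := lt_trans hN0 hq
  have hRaR : R ≤ a * R := le_mul_of_one_le_left hR.le ha
  -- unit vector and profile
  set e : EuclideanSpace ℝ (Fin N) := EuclideanSpace.single (⟨0, by omega⟩ : Fin N) (1:ℝ) with he_def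
  have he : ‖e‖ = 1 := by simp [he_def]
  set W : ℝ → ℝ := fun r => u (r • e) with hW_def
  have hWsm : ContDiff ℝ (⊤ : ℕ∞) W := hsm.comp ((contDiff_id (E := ℝ)).smul contDiff_const)
  have hWdiff : Differentiable ℝ W := hWsm.differentiable (by simp)
  have hWu : ∀ x : EuclideanSpace ℝ (Fin N), u x = W ‖x‖ := by
    intro x
    rw [hrad, hW_def]; simp only []
    rw [hrad (‖x‖ • e), norm_smul, he, mul_one, Real.norm_eq_abs, abs_norm]
  -- support facts
  obtain ⟨ε, hε0, hεK⟩ : ∃ ε > 0, ∀ y : EuclideanSpace ℝ (Fin N), ‖y‖ < ε → u y = 0 := by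
    have h0K : (0 : EuclideanSpace ℝ (Fin N)) ∉ tsupport u := fun h => (hsupp h).2 rfl
    have : (tsupport u)ᶜ ∈ nhds (0 : EuclideanSpace ℝ (Fin N)) :=
      (isClosed_tsupport u).isOpen_compl.mem_nhds h0K
    rw [Metric.mem_nhds_iff] at this
    obtain ⟨ε, hε, hsub⟩ := this
    exact ⟨ε, hε, fun y hy => image_eq_zero_of_notMem_tsupport
      (hsub (by simpa [Metric.mem_ball, dist_zero_right] using hy))⟩
  obtain ⟨R', hR'R, hR'⟩ : ∃ R', R' < R ∧ ∀ y : EuclideanSpace ℝ (Fin N), R' < ‖y‖ → u y = 0 := by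
    have hKc : IsCompact (tsupport u) := by
      apply Metric.isCompact_of_isClosed_isBounded (isClosed_tsupport u)
      exact Metric.isBounded_ball.subset (fun y hy => (hsupp hy).1)
    rcases (tsupport u).eq_empty_or_nonempty with hemp | hne
    · exact ⟨R/2, by linarith, fun y hy => image_eq_zero_of_notMem_tsupport (by simp [hemp])⟩
    · obtain ⟨m, hmK, hm⟩ := hKc.exists_isMaxOn hne continuous_norm.continuousOn
      refine ⟨‖m‖, by simpa [Metric.mem_ball, dist_zero_right] using (hsupp hmK).1,
        fun y hy => image_eq_zero_of_notMem_tsupport (fun hyK => absurd (hm hyK) (not_le.2 hy))⟩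
  have hW0 : ∀ r : ℝ, |r| < ε → W r = 0 := fun r h => hεK _ (by
    rw [norm_smul, he, mul_one, Real.norm_eq_abs]; exact h)
  have hWR : ∀ r : ℝ, R' < |r| → W r = 0 := fun r h => hR' _ (by
    rw [norm_smul, he, mul_one, Real.norm_eq_abs]; exact h)
  have hR'R2 : R' < a * R := lt_of_lt_of_le hR'R hRaR
  -- 1-D transformed data
  set C : ℝ := lam ^ (-(((N : ℝ) - 1)/(N : ℝ))) with hC_def
  have hC : 0 < C := Real.rpow_pos_of_pos hl0 _
  set g : ℝ → ℝ := fun r => (a*R) ^ (1 - lam) * r ^ lam with hg_def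
  set g' : ℝ → ℝ := fun r => (a*R) ^ (1 - lam) * (lam * r ^ (lam - 1)) with hg'_def
  set V : ℝ → ℝ := fun r => C * W (g r) with hV_def
  have hgpos : ∀ r : ℝ, 0 < r → 0 < g r := fun r hr =>
    mul_pos (Real.rpow_pos_of_pos haR _) (Real.rpow_pos_of_pos hr _)
  have hg'pos : ∀ r : ℝ, 0 < r → 0 < g' r := fun r hr =>
    mul_pos (Real.rpow_pos_of_pos haR _) (mul_pos hl0 (Real.rpow_pos_of_pos hr _))
  have hgd : ∀ r ∈ Ioi (0:ℝ), HasDerivAt g (g' r) r := fun r hr =>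
    (Real.hasDerivAt_rpow_const (p := lam) (Or.inl (ne_of_gt hr))).const_mul _
  have hglt : ∀ {x y : ℝ}, 0 ≤ x → x < y → g x < g y := fun {x y} hx hxy =>
    mul_lt_mul_of_pos_left (Real.rpow_lt_rpow hx hxy hl0) (Real.rpow_pos_of_pos haR _)
  have hgle : ∀ {x y : ℝ}, 0 ≤ x → x ≤ y → g x ≤ g y := fun {x y} hx hxy =>
    mul_le_mul_of_nonneg_left (Real.rpow_le_rpow hx hxy hl0.le) (Real.rpow_pos_of_pos haR _).le
  have hgaR : g (a*R) = a*R := by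
    rw [hg_def]; simp only []
    rw [← Real.rpow_add haR, sub_add_cancel, Real.rpow_one]
  have hgR : ∀ r : ℝ, R ≤ r → R ≤ g r := by
    intro r hr
    calc R ≤ g R := by
          rw [hg_def]; simp only []
          rw [Real.mul_rpow ha0.le hR.le, mul_assoc, ← Real.rpow_add hR, sub_add_cancel,
            Real.rpow_one]
          nlinarith [Real.one_le_rpow ha (by linarith : (0:ℝ) ≤ 1 - lam)]
      _ ≤ g r := hgle hR.le hr
  have himg : g '' Ioi 0 = Ioi (0:ℝ) := by
    apply Subset.antisymm
    · rintro s ⟨r, hr, rfl⟩; exact hgpos r hr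
    · intro s hs
      refine ⟨(s / (a*R) ^ (1 - lam)) ^ (1/lam), Real.rpow_pos_of_pos
        (div_pos hs (Real.rpow_pos_of_pos haR _)) _, ?_⟩
      rw [hg_def]; simp only []
      rw [← Real.rpow_mul (div_pos hs (Real.rpow_pos_of_pos haR _)).le,
        one_div_mul_cancel hl0.ne', Real.rpow_one, mul_comm,
        div_mul_cancel₀ _ (ne_of_gt (Real.rpow_pos_of_pos haR _))]
  have hinj : InjOn g (Ioi 0) := StrictMonoOn.injOn (fun x hx y _ hxy => hglt (le_of_lt hx) hxy)
  -- uScaled is radial with profile V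
  have hgr0 : g (a ^ ((1:ℝ) - 1/lam) * R) = R := by
    have e1 : ((a:ℝ) ^ ((1:ℝ)-1/lam)) ^ lam = a ^ (lam - 1) := by
      rw [← Real.rpow_mul ha0.le]; congr 1; field_simp
    have e2 : a^((1:ℝ)-lam) * a^(lam-(1:ℝ)) = 1 := by
      rw [← Real.rpow_add ha0]; norm_num
    have e3 : R^((1:ℝ)-lam) * R^lam = R := by
      rw [← Real.rpow_add hR, sub_add_cancel, Real.rpow_one]
    rw [hg_def]; simp only []
    rw [Real.mul_rpow (Real.rpow_nonneg ha0.le _) hR.le, e1,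
      Real.mul_rpow ha0.le hR.le, mul_mul_mul_comm, e2, e3, one_mul]
  have hscaled : uScaled N a R lam u = fun x => V ‖x‖ := by
    funext x
    simp only [uScaled]
    rcases eq_or_lt_of_le (norm_nonneg x) with h0 | hx0
    · have hx : x = 0 := norm_eq_zero.1 h0.symm
      subst hx
      rw [if_pos (by rw [norm_zero]; positivity)]
      rw [smul_zero]
      simp [hV_def, hW_def, hg_def, hC_def, Real.zero_rpow hl0.ne']
    · by_cases hle : ‖x‖ ≤ a ^ ((1:ℝ) - 1/lam) * R
      · rw [if_pos hle]
        have h1 : ‖x‖ ^ (lam - 1) * ‖x‖ = ‖x‖ ^ lam := by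
          rw [← Real.rpow_add_one (ne_of_gt hx0), sub_add_cancel]
        have hcx : (‖x‖/(a*R)) ^ (lam-1) * ‖x‖ = g ‖x‖ := by
          rw [hg_def]; simp only []
          rw [Real.div_rpow (norm_nonneg x) haR.le, div_mul_eq_mul_div, h1,
            div_eq_mul_inv, ← Real.rpow_neg haR.le, neg_sub, mul_comm]
        rw [hV_def]; simp only []
        rw [hC_def, hWu, norm_smul, Real.norm_eq_abs,
          abs_of_nonneg (Real.rpow_nonneg (div_nonneg (norm_nonneg x) haR.le) _), hcx, hW_def]
      · rw [if_neg hle]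
        have hgx : R < g ‖x‖ := by
          rw [← hgr0]; exact hglt (by positivity) (not_le.1 hle)
        rw [hV_def]; simp only []
        rw [hWR _ (by rw [abs_of_pos (hgpos _ hx0)]; linarith), mul_zero]

  -- part 2
  set f₁ : ℝ → ℝ := fun r => |V r| ^ q * r ^ (-(N:ℝ)) * (Real.log (a*R/r)) ^ (-β) with hf₁_def
  set f₂ : ℝ → ℝ := fun r => |W r| ^ q * r ^ (-(N:ℝ)) * (Real.log (a*R/r)) ^ (-β) with hf₂_def
  have hf₁0 : ∀ r : ℝ, R ≤ r → f₁ r = 0 := by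
    intro r hr
    have hw : W (g r) = 0 := hWR _ (by
      rw [abs_of_pos (hgpos r (lt_of_lt_of_le hR hr))]; linarith [hgR r hr])
    simp [hf₁_def, hV_def, hw, abs_zero, Real.zero_rpow hq0.ne']
  have hf₂0 : ∀ r : ℝ, R ≤ r → f₂ r = 0 := by
    intro r hr
    have hw : W r = 0 := hWR r (by
      rw [abs_of_pos (lt_of_lt_of_le hR hr)]; linarith)
    simp [hf₂_def, hw, abs_zero, Real.zero_rpow hq0.ne']
  have hkey2 : (∫ y in Ioi (0:ℝ), y ^ (N - 1) • f₁ y) = ∫ y in Ioi (0:ℝ), y ^ (N - 1) • f₂ y := by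
    calc (∫ y in Ioi (0:ℝ), y ^ (N - 1) • f₁ y)
        = ∫ r in Ioi (0:ℝ), |g' r| • ((g r) ^ (N-1) • f₂ (g r)) := by
          apply setIntegral_congr_fun measurableSet_Ioi
          intro r hr
          have hr0 : (0:ℝ) < r := hr
          simp only [smul_eq_mul, hf₁_def, hf₂_def, hV_def]
          by_cases hw : W (g r) = 0
          · simp [hw, abs_zero, Real.zero_rpow hq0.ne']
          · have hgr : 0 < g r := hgpos r hr0
            have hgrR' : g r ≤ R' := by
              by_contra h
              exact hw (hWR _ (by rwa [abs_of_pos hgr, ← not_le]))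
            have hraR : r < a*R := by
              by_contra h
              have h2 : a*R ≤ g r := by rw [← hgaR]; exact hgle haR.le (not_lt.1 h)
              linarith
            have ht : 0 < Real.log (a*R/r) := Real.log_pos ((one_lt_div hr0).2 hraR)
            have h1 : a*R/(g r) = (a*R/r) ^ lam := by
              rw [Real.div_rpow haR.le hr0.le,
                div_eq_div_iff (ne_of_gt hgr) (ne_of_gt (Real.rpow_pos_of_pos hr0 _))]
              calc (a*R) * r^lam = ((a*R)^lam * (a*R)^((1:ℝ)-lam)) * r^lam := by
                    rw [← Real.rpow_add haR, show lam + (1-lam) = (1:ℝ) by ring, Real.rpow_one]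
                _ = (a*R)^lam * g r := by rw [hg_def]; ring
            have hlog : Real.log (a*R/(g r)) = lam * Real.log (a*R/r) := by
              rw [h1, Real.log_rpow (div_pos haR hr0)]
            rw [hlog, abs_mul, abs_of_pos hC, Real.mul_rpow hC.le (abs_nonneg _),
              Real.mul_rpow hl0.le ht.le, abs_of_pos (hg'pos r hr0)]
            have hXY : r^(N-1) * C^q * r^(-(N:ℝ))
                = g' r * (g r)^(N-1) * (g r)^(-(N:ℝ)) * lam^(-β) := by
              have hX : 0 < r^(N-1) * C^q * r^(-(N:ℝ)) :=
                mul_pos (mul_pos (pow_pos hr0 _) (Real.rpow_pos_of_pos hC _))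
                  (Real.rpow_pos_of_pos hr0 _)
              have hY : 0 < g' r * (g r)^(N-1) * (g r)^(-(N:ℝ)) * lam^(-β) :=
                mul_pos (mul_pos (mul_pos (hg'pos r hr0) (pow_pos hgr _))
                  (Real.rpow_pos_of_pos hgr _)) (Real.rpow_pos_of_pos hl0 _)
              apply Real.log_injOn_pos (mem_Ioi.2 hX) (mem_Ioi.2 hY)
              have hNcast : ((N - 1 : ℕ) : ℝ) = (N:ℝ) - 1 := by
                have h1N : (1:ℕ) ≤ N := by omega
                push_cast [h1N]; ring
              have Lg : Real.log (g r) = (1-lam) * Real.log (a*R) + lam * Real.log r := by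
                rw [hg_def]; simp only []
                rw [Real.log_mul (ne_of_gt (Real.rpow_pos_of_pos haR _))
                  (ne_of_gt (Real.rpow_pos_of_pos hr0 _)), Real.log_rpow haR,
                  Real.log_rpow hr0]
              have Lg' : Real.log (g' r)
                  = (1-lam) * Real.log (a*R) + (Real.log lam + (lam-1) * Real.log r) := by
                rw [hg'_def]; simp only []
                rw [Real.log_mul (ne_of_gt (Real.rpow_pos_of_pos haR _))
                  (ne_of_gt (mul_pos hl0 (Real.rpow_pos_of_pos hr0 _))),
                  Real.log_mul (ne_of_gt hl0) (ne_of_gt (Real.rpow_pos_of_pos hr0 _)),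
                  Real.log_rpow haR, Real.log_rpow hr0]
              have LX : Real.log (r^(N-1) * C^q * r^(-(N:ℝ)))
                  = ((N:ℝ)-1) * Real.log r + q * (-(((N:ℝ)-1)/(N:ℝ))) * Real.log lam
                    + (-(N:ℝ)) * Real.log r := by
                rw [Real.log_mul (ne_of_gt (mul_pos (pow_pos hr0 _)
                    (Real.rpow_pos_of_pos hC _))) (ne_of_gt (Real.rpow_pos_of_pos hr0 _)),
                  Real.log_mul (ne_of_gt (pow_pos hr0 _)) (ne_of_gt (Real.rpow_pos_of_pos hC _)),
                  Real.log_pow, Real.log_rpow hr0, hC_def,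
                  Real.log_rpow (Real.rpow_pos_of_pos hl0 _), Real.log_rpow hl0, hNcast]
                ring
              have LY : Real.log (g' r * (g r)^(N-1) * (g r)^(-(N:ℝ)) * lam^(-β))
                  = ((1-lam) * Real.log (a*R) + (Real.log lam + (lam-1) * Real.log r))
                    + ((N:ℝ)-1) * ((1-lam) * Real.log (a*R) + lam * Real.log r)
                    + (-(N:ℝ)) * ((1-lam) * Real.log (a*R) + lam * Real.log r)
                    + (-β) * Real.log lam := by
                rw [Real.log_mul (ne_of_gt (mul_pos (mul_pos (hg'pos r hr0) (pow_pos hgr _))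
                    (Real.rpow_pos_of_pos hgr _))) (ne_of_gt (Real.rpow_pos_of_pos hl0 _)),
                  Real.log_mul (ne_of_gt (mul_pos (hg'pos r hr0) (pow_pos hgr _)))
                    (ne_of_gt (Real.rpow_pos_of_pos hgr _)),
                  Real.log_mul (ne_of_gt (hg'pos r hr0)) (ne_of_gt (pow_pos hgr _)),
                  Real.log_pow, Real.log_rpow hgr, Real.log_rpow hl0, Lg, Lg', hNcast]
              rw [LX, LY, hβ]
              ring
            linear_combination (|W (g r)|^q * Real.log (a*R/r) ^ (-β)) * hXY
      _ = ∫ y in g '' Ioi (0:ℝ), y ^ (N-1) • f₂ y :=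
          (integral_image_eq_integral_abs_deriv_smul measurableSet_Ioi
            (fun r hr => (hgd r hr).hasDerivWithinAt) hinj
            (fun y => y ^ (N-1) • f₂ y)).symm
      _ = ∫ y in Ioi (0:ℝ), y ^ (N - 1) • f₂ y := by rw [himg]
  have part2 :
      (∫ x in Metric.ball (0 : EuclideanSpace ℝ (Fin N)) R,
        |uScaled N a R lam u x| ^ q * ‖x‖ ^ (-(N : ℝ)) * (Real.log (a*R/‖x‖)) ^ (-β)) =
      (∫ x in Metric.ball (0 : EuclideanSpace ℝ (Fin N)) R,
        |u x| ^ q * ‖x‖ ^ (-(N : ℝ)) * (Real.log (a*R/‖x‖)) ^ (-β)) := by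
    calc (∫ x in Metric.ball (0 : EuclideanSpace ℝ (Fin N)) R,
        |uScaled N a R lam u x| ^ q * ‖x‖ ^ (-(N : ℝ)) * (Real.log (a*R/‖x‖)) ^ (-β))
        = ∫ x : EuclideanSpace ℝ (Fin N), f₁ ‖x‖ := by
          rw [hscaled]
          exact setIntegral_eq_integral_of_forall_compl_eq_zero (fun x hx => hf₁0 _ (by
            simpa [Metric.mem_ball, dist_zero_right, not_lt] using hx))
      _ = (Module.finrank ℝ (EuclideanSpace ℝ (Fin N))) •
            (volume (Metric.ball (0:EuclideanSpace ℝ (Fin N)) 1)).toReal •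
            ∫ y in Ioi (0:ℝ), y ^ (Module.finrank ℝ (EuclideanSpace ℝ (Fin N)) - 1) • f₁ y :=
          integral_fun_norm_addHaar volume f₁
      _ = (Module.finrank ℝ (EuclideanSpace ℝ (Fin N))) •
            (volume (Metric.ball (0:EuclideanSpace ℝ (Fin N)) 1)).toReal •
            ∫ y in Ioi (0:ℝ), y ^ (Module.finrank ℝ (EuclideanSpace ℝ (Fin N)) - 1) • f₂ y := by
          rw [finrank_euclideanSpace_fin, hkey2]
      _ = ∫ x : EuclideanSpace ℝ (Fin N), f₂ ‖x‖ :=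
          (integral_fun_norm_addHaar volume f₂).symm
      _ = ∫ x in Metric.ball (0 : EuclideanSpace ℝ (Fin N)) R,
            |u x| ^ q * ‖x‖ ^ (-(N : ℝ)) * (Real.log (a*R/‖x‖)) ^ (-β) := by
          rw [show u = fun x => W ‖x‖ from funext hWu]
          exact (setIntegral_eq_integral_of_forall_compl_eq_zero (fun x hx => hf₂0 _ (by
            simpa [Metric.mem_ball, dist_zero_right, not_lt] using hx))).symm

  -- part 1
  have hderivW0 : ∀ r : ℝ, R' < |r| → deriv W r = 0 := by
    intro r hr
    have hopen : IsOpen {s : ℝ | R' < |s|} := isOpen_lt continuous_const continuous_abs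
    have hev : W =ᶠ[nhds r] (fun _ => 0) :=
      Filter.eventuallyEq_of_mem (hopen.mem_nhds hr) (fun s hs => hWR s hs)
    rw [hev.deriv_eq, deriv_const]
  set D : ℝ → ℝ := fun r => if 0 < r then C * (deriv W (g r) * g' r) else 0 with hD_def
  have hVd : ∀ r : ℝ, 0 < r → HasDerivAt V (C * (deriv W (g r) * g' r)) r := fun r hr =>
    (((hWdiff (g r)).hasDerivAt.comp r (hgd r hr)).const_mul C)
  obtain ⟨δ, hδ0, hδ⟩ : ∃ δ > 0, ∀ r : ℝ, |r| < δ → V r = 0 := by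
    refine ⟨(ε / (a*R) ^ ((1:ℝ)-lam)) ^ (1/lam),
      Real.rpow_pos_of_pos (div_pos hε0 (Real.rpow_pos_of_pos haR _)) _, ?_⟩
    intro r hrδ
    have hga : |g r| < ε := by
      have h1 : |g r| ≤ (a*R) ^ ((1:ℝ)-lam) * |r| ^ lam := by
        rw [hg_def]; simp only []
        rw [abs_mul, abs_of_pos (Real.rpow_pos_of_pos haR _)]
        exact mul_le_mul_of_nonneg_left (Real.abs_rpow_le_abs_rpow r lam)
          (le_of_lt (Real.rpow_pos_of_pos haR _))
      have h2 : |r| ^ lam < ε / (a*R) ^ ((1:ℝ)-lam) := by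
        calc |r| ^ lam < ((ε / (a*R) ^ ((1:ℝ)-lam)) ^ (1/lam)) ^ lam :=
              Real.rpow_lt_rpow (abs_nonneg r) hrδ hl0
          _ = ε / (a*R) ^ ((1:ℝ)-lam) := by
              rw [← Real.rpow_mul (div_pos hε0 (Real.rpow_pos_of_pos haR _)).le,
                one_div_mul_cancel hl0.ne', Real.rpow_one]
      have h3 : (a*R) ^ ((1:ℝ)-lam) * (|r| ^ lam) < ε := by
        rw [lt_div_iff₀ (Real.rpow_pos_of_pos haR _)] at h2
        linarith [h2]
      linarith
    rw [hV_def]; simp only []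
    rw [hW0 _ hga, mul_zero]
  have hu1 : ∀ x : EuclideanSpace ℝ (Fin N),
      ‖fderiv ℝ u x‖ ^ (N:ℝ) = |deriv W ‖x‖| ^ (N:ℝ) := by
    intro x
    by_cases hx : x = 0
    · subst hx
      have hev : u =ᶠ[nhds (0:EuclideanSpace ℝ (Fin N))] (fun _ => 0) :=
        Filter.eventuallyEq_of_mem (Metric.ball_mem_nhds 0 hε0)
          (fun y hy => hεK y (by simpa [Metric.mem_ball, dist_zero_right] using hy))
      have hd : deriv W 0 = 0 := by
        have hev2 : W =ᶠ[nhds (0:ℝ)] (fun _ => 0) :=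
          Filter.eventuallyEq_of_mem (Metric.ball_mem_nhds 0 hε0)
            (fun s hs => hW0 s (by simpa [Real.dist_eq] using hs))
        rw [hev2.deriv_eq, deriv_const]
      rw [hev.fderiv_eq, fderiv_fun_const]
      simp [hd]
    · rw [show u = fun y => W ‖y‖ from funext hWu,
        radial_fderiv_norm_eq W x hx (hWdiff _)]
  have hu2 : ∀ x : EuclideanSpace ℝ (Fin N),
      ‖fderiv ℝ (uScaled N a R lam u) x‖ ^ (N:ℝ) = |D ‖x‖| ^ (N:ℝ) := by
    intro x
    rw [hscaled]
    by_cases hx : x = 0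
    · subst hx
      have hev : (fun y : EuclideanSpace ℝ (Fin N) => V ‖y‖) =ᶠ[nhds 0] (fun _ => 0) :=
        Filter.eventuallyEq_of_mem (Metric.ball_mem_nhds 0 hδ0)
          (fun y hy => hδ _ (by
            rw [abs_norm]
            simpa [Metric.mem_ball, dist_zero_right] using hy))
      rw [hev.fderiv_eq, fderiv_fun_const]
      rw [hD_def]; simp
    · have hx0 : 0 < ‖x‖ := norm_pos_iff.2 hx
      rw [radial_fderiv_norm_eq V x hx ((hVd _ hx0).differentiableAt),
        (hVd _ hx0).deriv, hD_def]
      simp only [if_pos hx0]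
  have hD0 : ∀ r : ℝ, R ≤ r → D r = 0 := by
    intro r hr
    have hr0 : 0 < r := lt_of_lt_of_le hR hr
    have hdW : deriv W (g r) = 0 := hderivW0 _ (by
      rw [abs_of_pos (hgpos r hr0)]; linarith [hgR r hr])
    rw [hD_def]; simp only [if_pos hr0, hdW]; ring
  have hdWR : ∀ r : ℝ, R ≤ r → deriv W r = 0 := fun r hr => hderivW0 r (by
    rw [abs_of_pos (lt_of_lt_of_le hR hr)]; linarith)
  have hkey1 : (∫ y in Ioi (0:ℝ), y ^ (N-1) • |D y| ^ (N:ℝ))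
      = ∫ y in Ioi (0:ℝ), y ^ (N-1) • |deriv W y| ^ (N:ℝ) := by
    calc (∫ y in Ioi (0:ℝ), y ^ (N-1) • |D y| ^ (N:ℝ))
        = ∫ r in Ioi (0:ℝ), |g' r| • ((g r) ^ (N-1) • |deriv W (g r)| ^ (N:ℝ)) := by
          apply setIntegral_congr_fun measurableSet_Ioi
          intro r hr
          have hr0 : (0:ℝ) < r := hr
          have hgr : 0 < g r := hgpos r hr0
          have hg'r : 0 < g' r := hg'pos r hr0
          simp only [smul_eq_mul, hD_def, if_pos hr0]
          rw [abs_mul, abs_mul, abs_of_pos hC, abs_of_pos hg'r,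
            Real.mul_rpow hC.le (mul_nonneg (abs_nonneg _) hg'r.le),
            Real.mul_rpow (abs_nonneg _) hg'r.le]
          have hXY : r^(N-1) * (C^(N:ℝ) * (g' r)^(N:ℝ)) = g' r * (g r)^(N-1) := by
            have hX : 0 < r^(N-1) * (C^(N:ℝ) * (g' r)^(N:ℝ)) :=
              mul_pos (pow_pos hr0 _) (mul_pos (Real.rpow_pos_of_pos hC _)
                (Real.rpow_pos_of_pos hg'r _))
            have hY : 0 < g' r * (g r)^(N-1) := mul_pos hg'r (pow_pos hgr _)
            apply Real.log_injOn_pos (mem_Ioi.2 hX) (mem_Ioi.2 hY)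
            have hNcast : ((N - 1 : ℕ) : ℝ) = (N:ℝ) - 1 := by
              have h1N : (1:ℕ) ≤ N := by omega
              push_cast [h1N]; ring
            have Lg : Real.log (g r) = (1-lam) * Real.log (a*R) + lam * Real.log r := by
              rw [hg_def]; simp only []
              rw [Real.log_mul (ne_of_gt (Real.rpow_pos_of_pos haR _))
                (ne_of_gt (Real.rpow_pos_of_pos hr0 _)), Real.log_rpow haR,
                Real.log_rpow hr0]
            have Lg' : Real.log (g' r)
                = (1-lam) * Real.log (a*R) + (Real.log lam + (lam-1) * Real.log r) := by
              rw [hg'_def]; simp only []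
              rw [Real.log_mul (ne_of_gt (Real.rpow_pos_of_pos haR _))
                (ne_of_gt (mul_pos hl0 (Real.rpow_pos_of_pos hr0 _))),
                Real.log_mul (ne_of_gt hl0) (ne_of_gt (Real.rpow_pos_of_pos hr0 _)),
                Real.log_rpow haR, Real.log_rpow hr0]
            have LX : Real.log (r^(N-1) * (C^(N:ℝ) * (g' r)^(N:ℝ)))
                = ((N:ℝ)-1) * Real.log r + ((N:ℝ) * (-(((N:ℝ)-1)/(N:ℝ))) * Real.log lam)
                  + (N:ℝ) * ((1-lam) * Real.log (a*R)
                    + (Real.log lam + (lam-1) * Real.log r)) := by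
              rw [Real.log_mul (ne_of_gt (pow_pos hr0 _)) (ne_of_gt (mul_pos
                  (Real.rpow_pos_of_pos hC _) (Real.rpow_pos_of_pos hg'r _))),
                Real.log_mul (ne_of_gt (Real.rpow_pos_of_pos hC _))
                  (ne_of_gt (Real.rpow_pos_of_pos hg'r _)),
                Real.log_pow, Real.log_rpow hC, Real.log_rpow hg'r, hC_def,
                Real.log_rpow hl0, Lg', hNcast]
              ring
            have LY : Real.log (g' r * (g r)^(N-1))
                = ((1-lam) * Real.log (a*R) + (Real.log lam + (lam-1) * Real.log r))
                  + ((N:ℝ)-1) * ((1-lam) * Real.log (a*R) + lam * Real.log r) := by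
              rw [Real.log_mul (ne_of_gt hg'r) (ne_of_gt (pow_pos hgr _)),
                Real.log_pow, Lg, Lg', hNcast]
            rw [LX, LY]
            field_simp
            ring
          linear_combination |deriv W (g r)| ^ (N:ℝ) * hXY
      _ = ∫ y in g '' Ioi (0:ℝ), y ^ (N-1) • |deriv W y| ^ (N:ℝ) :=
          (integral_image_eq_integral_abs_deriv_smul measurableSet_Ioi
            (fun r hr => (hgd r hr).hasDerivWithinAt) hinj
            (fun y => y ^ (N-1) • |deriv W y| ^ (N:ℝ))).symm
      _ = ∫ y in Ioi (0:ℝ), y ^ (N-1) • |deriv W y| ^ (N:ℝ) := by rw [himg]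
  have part1 :
      (∫ x in Metric.ball (0 : EuclideanSpace ℝ (Fin N)) R,
        ‖fderiv ℝ (uScaled N a R lam u) x‖ ^ (N : ℝ)) =
      (∫ x in Metric.ball (0 : EuclideanSpace ℝ (Fin N)) R, ‖fderiv ℝ u x‖ ^ (N : ℝ)) := by
    calc (∫ x in Metric.ball (0 : EuclideanSpace ℝ (Fin N)) R,
          ‖fderiv ℝ (uScaled N a R lam u) x‖ ^ (N : ℝ))
        = ∫ x in Metric.ball (0 : EuclideanSpace ℝ (Fin N)) R, |D ‖x‖| ^ (N:ℝ) := by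
          simp only [hu2]
      _ = ∫ x : EuclideanSpace ℝ (Fin N), |D ‖x‖| ^ (N:ℝ) :=
          setIntegral_eq_integral_of_forall_compl_eq_zero (fun x hx => by
            rw [hD0 _ (by simpa [Metric.mem_ball, dist_zero_right, not_lt] using hx),
              abs_zero, Real.zero_rpow hNne])
      _ = (Module.finrank ℝ (EuclideanSpace ℝ (Fin N))) •
            (volume (Metric.ball (0:EuclideanSpace ℝ (Fin N)) 1)).toReal •
            ∫ y in Ioi (0:ℝ), y ^ (Module.finrank ℝ (EuclideanSpace ℝ (Fin N)) - 1) •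
              |D y| ^ (N:ℝ) :=
          integral_fun_norm_addHaar volume (fun r => |D r| ^ (N:ℝ))
      _ = (Module.finrank ℝ (EuclideanSpace ℝ (Fin N))) •
            (volume (Metric.ball (0:EuclideanSpace ℝ (Fin N)) 1)).toReal •
            ∫ y in Ioi (0:ℝ), y ^ (Module.finrank ℝ (EuclideanSpace ℝ (Fin N)) - 1) •
              |deriv W y| ^ (N:ℝ) := by
          rw [finrank_euclideanSpace_fin, hkey1]
      _ = ∫ x : EuclideanSpace ℝ (Fin N), |deriv W ‖x‖| ^ (N:ℝ) :=
          (integral_fun_norm_addHaar volume (fun r => |deriv W r| ^ (N:ℝ))).symm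
      _ = ∫ x in Metric.ball (0 : EuclideanSpace ℝ (Fin N)) R, |deriv W ‖x‖| ^ (N:ℝ) :=
          (setIntegral_eq_integral_of_forall_compl_eq_zero (fun x hx => by
            rw [hdWR _ (by simpa [Metric.mem_ball, dist_zero_right, not_lt] using hx),
              abs_zero, Real.zero_rpow hNne])).symm
      _ = ∫ x in Metric.ball (0 : EuclideanSpace ℝ (Fin N)) R, ‖fderiv ℝ u x‖ ^ (N : ℝ) := by
          simp only [hu1]
  exact ⟨part1, part2⟩
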